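/- Let X, Y be real Hilbert spaces, T : X → Y bounded linear, ρ = T f† with f† ∈ (ker T)^⊥. Suppose for each δ > 0 we have data ρ^δ ∈ Y with ‖ρ − ρ^δ‖ ≤ δ and a bounded linear operator T^δ : X → Y with ‖T f† − T^δ f†‖ ≤ C δ for a constant C ≥ 0, and a parameter α(δ) > 0 with α(δ) → 0 and δ²/α(δ) → 0 as δ → 0. Define f_α^δ = ((T^δ)* T^δ + α(δ) I)⁻¹ (T^δ)* ρ^δ. Then ‖f_α^δ − f†‖ ≤ α(δ)^{-1/2}(δ + Cδ) + ‖α(δ)((T^δ)* T^δ + α(δ) I)⁻¹ f†‖, and if additionally T^δ → T in operator norm as δ → 0, then f_α^δ → f† as δ → 0. -/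

import Mathlib

/-!
Write `A = B†B + a` with `B = T^δ`, `a = α(δ)`. The identity `⟪A x, x⟫ = ‖B x‖² + a ‖x‖²` gives
the two basic estimates `‖a A⁻¹‖ ≤ 1` and `‖A⁻¹ B† y‖ ≤ ‖y‖ / (2 √a)`. Since
`f_α^δ - f† = A⁻¹ B† (ρ^δ - B f†) - a A⁻¹ f†`, this yields the error bound, whose first term is
`O(δ / √α)`. The second term `a A⁻¹ f†` tends to zero when `f† = T† w`, because
`‖a A⁻¹ T† w‖ ≤ ‖a A⁻¹ B† w‖ + ‖a A⁻¹ (T - B)† w‖ ≤ (√a + ‖B - T‖) ‖w‖`; as `range T†` is dense in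
`(ker T)ᗮ` and the operators `a A⁻¹` are contractions, it tends to zero on all of `(ker T)ᗮ`.
-/

open Filter Topology
open scoped InnerProduct

lemma tendsto_rpow_neg_half_mul_of_tendsto_sq_div {ι : Type*} {l : Filter ι} {δ α : ι → ℝ}
    (hpos : ∀ᶠ i in l, 0 ≤ δ i ∧ 0 < α i) (h : Tendsto (fun i => δ i ^ 2 / α i) l (𝓝 0)) :
    Tendsto (fun i => α i ^ (-(1 : ℝ) / 2) * δ i) l (𝓝 0) := by
  refine (Real.sqrt_zero ▸ h.sqrt).congr' (hpos.mono fun i ⟨hδ, hα⟩ => ?_)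
  dsimp only
  rw [Real.sqrt_div' _ hα.le, Real.sqrt_sq hδ, Real.sqrt_eq_rpow, neg_div, Real.rpow_neg hα.le,
    div_eq_mul_inv, mul_comm]

namespace ContinuousLinearMap

theorem tendsto_apply_of_mem_closure {𝕜 E F ι : Type*} [NontriviallyNormedField 𝕜]
    [SeminormedAddCommGroup E] [NormedSpace 𝕜 E] [SeminormedAddCommGroup F] [NormedSpace 𝕜 F]
    {l : Filter ι} {A : ι → E →L[𝕜] F} {M : ℝ} (hA : ∀ᶠ i in l, ‖A i‖ ≤ M) {s : Set E}
    (hs : ∀ y ∈ s, Tendsto (fun i => A i y) l (𝓝 0)) {x : E} (hx : x ∈ closure s) :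
    Tendsto (fun i => A i x) l (𝓝 0) := by
  rw [Metric.tendsto_nhds]
  intro ε hε
  obtain ⟨y, hy, hxy⟩ := Metric.mem_closure_iff.mp hx (ε / (2 * (|M| + 1))) (by positivity)
  filter_upwards [hA, Metric.tendsto_nhds.mp (hs y hy) (ε / 2) (half_pos hε)] with i hAi hAiy
  rw [dist_eq_norm] at hxy
  rw [dist_zero_right] at hAiy ⊢
  have hdiff : ‖A i (x - y)‖ ≤ (|M| + 1) * ‖x - y‖ :=
    ((A i).le_opNorm _).trans (by gcongr; linarith [le_abs_self M])
  calc ‖A i x‖ ≤ ‖A i (x - y)‖ + ‖A i y‖ := by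
        simpa only [map_sub, sub_add_cancel] using norm_add_le (A i (x - y)) (A i y)
    _ < (|M| + 1) * (ε / (2 * (|M| + 1))) + ε / 2 := by
        gcongr
        exact hdiff.trans_lt (by gcongr)
    _ = ε := by field_simp; ring

variable {X Y : Type*} [NormedAddCommGroup X] [InnerProductSpace ℝ X] [CompleteSpace X]
  [NormedAddCommGroup Y] [InnerProductSpace ℝ Y] [CompleteSpace Y]

noncomputable def tikhonovOperator (B : X →L[ℝ] Y) (a : ℝ) : X →L[ℝ] X :=
  B† ∘L B + a • .id ℝ X

/-- Only a right inverse is asked for: when `0 < a` it is also a left inverse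
(`IsTikhonovInverse.apply_tikhonovOperator`). -/
def IsTikhonovInverse (B : X →L[ℝ] Y) (a : ℝ) (S : X →L[ℝ] X) : Prop :=
  tikhonovOperator B a ∘L S = .id ℝ X

section Tikhonov

variable {B : X →L[ℝ] Y} {a : ℝ} {S : X →L[ℝ] X}

lemma tikhonovOperator_apply (x : X) : tikhonovOperator B a x = (B†) (B x) + a • x := rfl

lemma inner_tikhonovOperator_apply_self (x : X) :
    inner ℝ (tikhonovOperator B a x) x = ‖B x‖ ^ 2 + a * ‖x‖ ^ 2 := by
  rw [tikhonovOperator_apply, inner_add_left, real_inner_smul_left, adjoint_inner_left,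
    real_inner_self_eq_norm_sq, real_inner_self_eq_norm_sq]

lemma IsTikhonovInverse.tikhonovOperator_apply_apply (h : IsTikhonovInverse B a S) (x : X) :
    tikhonovOperator B a (S x) = x :=
  congr($h x)

lemma IsTikhonovInverse.inner_apply_self (h : IsTikhonovInverse B a S) (x : X) :
    inner ℝ x (S x) = ‖B (S x)‖ ^ 2 + a * ‖S x‖ ^ 2 := by
  nth_rw 1 [← h.tikhonovOperator_apply_apply x]
  exact inner_tikhonovOperator_apply_self (S x)

lemma IsTikhonovInverse.norm_smul_apply_le (h : IsTikhonovInverse B a S) (ha : 0 ≤ a) (x : X) :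
    ‖a • S x‖ ≤ ‖x‖ := by
  have hinner := h.inner_apply_self x
  have hcs : inner ℝ x (S x) ≤ ‖x‖ * ‖S x‖ := real_inner_le_norm _ _
  rw [norm_smul, Real.norm_of_nonneg ha]
  rcases (norm_nonneg (S x)).eq_or_lt with h0 | h0
  · rw [← h0, mul_zero]
    exact norm_nonneg x
  · nlinarith [sq_nonneg ‖B (S x)‖]

lemma IsTikhonovInverse.norm_smul_le_one (h : IsTikhonovInverse B a S) (ha : 0 ≤ a) :
    ‖a • S‖ ≤ 1 :=
  opNorm_le_bound _ zero_le_one fun x => by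
    simpa only [one_mul, smul_apply] using h.norm_smul_apply_le ha x

lemma IsTikhonovInverse.two_mul_sqrt_mul_norm_apply_adjoint_le (h : IsTikhonovInverse B a S)
    (y : Y) : 2 * √a * ‖S ((B†) y)‖ ≤ ‖y‖ := by
  rcases le_or_gt a 0 with ha | ha
  · rw [Real.sqrt_eq_zero'.mpr ha, mul_zero, zero_mul]
    exact norm_nonneg y
  set x := S ((B†) y)
  -- `‖B x‖² + a ‖x‖² = ⟪y, B x⟫ ≤ ‖y‖ ‖B x‖ ≤ ‖B x‖² + ‖y‖² / 4`
  have hinner : inner ℝ y (B x) = ‖B x‖ ^ 2 + a * ‖x‖ ^ 2 := by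
    rw [← adjoint_inner_left, h.inner_apply_self]
  have hcs : inner ℝ y (B x) ≤ ‖y‖ * ‖B x‖ := real_inner_le_norm _ _
  have hsq : (2 * √a * ‖x‖) ^ 2 ≤ ‖y‖ ^ 2 := by
    rw [mul_pow, mul_pow, Real.sq_sqrt ha.le]
    nlinarith [sq_nonneg (2 * ‖B x‖ - ‖y‖)]
  exact abs_le_of_sq_le_sq' hsq (norm_nonneg y) |>.2

lemma IsTikhonovInverse.apply_tikhonovOperator (h : IsTikhonovInverse B a S) (ha : 0 < a)
    (x : X) : S (tikhonovOperator B a x) = x := by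
  set u := S (tikhonovOperator B a x) - x
  have hu : tikhonovOperator B a u = 0 := by
    rw [map_sub, h.tikhonovOperator_apply_apply, sub_self]
  have hnorm : ‖B u‖ ^ 2 + a * ‖u‖ ^ 2 = 0 := by
    rw [← inner_tikhonovOperator_apply_self, hu, inner_zero_left]
  have hau : a * ‖u‖ ^ 2 = 0 :=
    (add_eq_zero_iff_of_nonneg (by positivity) (by positivity)).mp hnorm |>.2
  simpa [u, ha.ne', sub_eq_zero] using hau

lemma IsTikhonovInverse.apply_adjoint_sub_eq (h : IsTikhonovInverse B a S) (ha : 0 < a)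
    (y : Y) (f : X) : S ((B†) y) - f = S ((B†) (y - B f)) - a • S f := by
  nth_rw 1 [← h.apply_tikhonovOperator ha f]
  rw [tikhonovOperator_apply, map_add, map_smul, map_sub, map_sub]
  abel

lemma IsTikhonovInverse.norm_apply_adjoint_sub_le (h : IsTikhonovInverse B a S) (ha : 0 < a)
    (y : Y) (f : X) : ‖S ((B†) y) - f‖ ≤ a ^ (-(1 : ℝ) / 2) * ‖y - B f‖ + ‖a • S f‖ := by
  have hpow : a ^ (-(1 : ℝ) / 2) = (√a)⁻¹ := by
    rw [Real.sqrt_eq_rpow, ← Real.rpow_neg ha.le, neg_div]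
  have hdata : ‖S ((B†) (y - B f))‖ ≤ (√a)⁻¹ * ‖y - B f‖ := by
    have := h.two_mul_sqrt_mul_norm_apply_adjoint_le (y - B f)
    rw [inv_mul_eq_div, le_div_iff₀ (Real.sqrt_pos.mpr ha)]
    nlinarith [norm_nonneg (S ((B†) (y - B f))), Real.sqrt_nonneg a]
  rw [h.apply_adjoint_sub_eq ha, hpow]
  exact (norm_sub_le _ _).trans (by gcongr)

lemma IsTikhonovInverse.norm_smul_apply_adjoint_le {T : X →L[ℝ] Y} (h : IsTikhonovInverse B a S)
    (ha : 0 ≤ a) (w : Y) : ‖a • S ((T†) w)‖ ≤ (√a + ‖B - T‖) * ‖w‖ := by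
  have hsplit : (T†) w = (B†) w - ((B - T)†) w := by simp
  have hB : ‖a • S ((B†) w)‖ ≤ √a * ‖w‖ := by
    have := h.two_mul_sqrt_mul_norm_apply_adjoint_le w
    calc ‖a • S ((B†) w)‖ = √a * (√a * ‖S ((B†) w)‖) := by
          rw [norm_smul, Real.norm_of_nonneg ha, ← mul_assoc, Real.mul_self_sqrt ha]
      _ ≤ √a * ‖w‖ := by
          gcongr
          nlinarith [norm_nonneg (S ((B†) w)), Real.sqrt_nonneg a]
  have hBT : ‖a • S (((B - T)†) w)‖ ≤ ‖B - T‖ * ‖w‖ :=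
    calc ‖a • S (((B - T)†) w)‖ ≤ ‖((B - T)†) w‖ := h.norm_smul_apply_le ha _
      _ ≤ ‖(B - T)†‖ * ‖w‖ := ((B - T)†).le_opNorm w
      _ = ‖B - T‖ * ‖w‖ := by rw [adjoint.norm_map]
  rw [hsplit, map_sub, smul_sub, add_mul]
  exact (norm_sub_le _ _).trans (add_le_add hB hBT)

end Tikhonov

lemma tendsto_smul_apply_of_isTikhonovInverse {ι : Type*} {l : Filter ι} {T : X →L[ℝ] Y}
    {B : ι → X →L[ℝ] Y} {a : ι → ℝ} {S : ι → X →L[ℝ] X}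
    (hB : Tendsto (fun i => ‖B i - T‖) l (𝓝 0)) (ha : Tendsto a l (𝓝 0))
    (hS : ∀ᶠ i in l, 0 ≤ a i ∧ IsTikhonovInverse (B i) (a i) (S i))
    {f : X} (hf : f ∈ (LinearMap.ker (T : X →ₗ[ℝ] Y))ᗮ) :
    Tendsto (fun i => a i • S i f) l (𝓝 0) := by
  have hf' : f ∈ closure (Set.range (T†)) := by
    rw [T.orthogonal_ker] at hf
    exact hf
  refine tendsto_apply_of_mem_closure (A := fun i => a i • S i)
    (hS.mono fun i hi => hi.2.norm_smul_le_one hi.1) ?_ hf'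
  rintro _ ⟨w, rfl⟩
  have hbound : Tendsto (fun i => (√(a i) + ‖B i - T‖) * ‖w‖) l (𝓝 0) := by
    simpa using (ha.sqrt.add hB).mul_const ‖w‖
  exact squeeze_zero_norm' (hS.mono fun i hi => hi.2.norm_smul_apply_adjoint_le hi.1 w) hbound

end ContinuousLinearMap

theorem tikhonov_convergence_perturbed_general
    {X Y : Type*} [NormedAddCommGroup X] [InnerProductSpace ℝ X] [CompleteSpace X]
    [NormedAddCommGroup Y] [InnerProductSpace ℝ Y] [CompleteSpace Y]
    (T : X →L[ℝ] Y) (fdag : X) (ρ : Y) (hρ : ρ = T fdag)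
    (hfdag : fdag ∈ (LinearMap.ker (T : X →ₗ[ℝ] Y))ᗮ)
    (ρδ : ℝ → Y) (Tδ : ℝ → X →L[ℝ] Y) (C : ℝ)
    (hdata : ∀ δ : ℝ, 0 < δ → ‖ρ - ρδ δ‖ ≤ δ)
    (hop : ∀ δ : ℝ, 0 < δ → ‖T fdag - (Tδ δ) fdag‖ ≤ C * δ)
    (α : ℝ → ℝ) (hαpos : ∀ δ : ℝ, 0 < δ → 0 < α δ)
    (hα0 : Tendsto α (nhdsWithin 0 (Set.Ioi 0)) (nhds 0))
    (hδ2α : Tendsto (fun δ : ℝ => δ ^ 2 / α δ) (nhdsWithin 0 (Set.Ioi 0)) (nhds 0))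
    (S_inv : ℝ → X →L[ℝ] X)
    (hS : ∀ δ : ℝ, 0 < δ →
      ((ContinuousLinearMap.adjoint (Tδ δ)).comp (Tδ δ)
          + α δ • ContinuousLinearMap.id ℝ X).comp (S_inv δ)
        = ContinuousLinearMap.id ℝ X ∧
      (S_inv δ).comp ((ContinuousLinearMap.adjoint (Tδ δ)).comp (Tδ δ)
          + α δ • ContinuousLinearMap.id ℝ X)
        = ContinuousLinearMap.id ℝ X)
    (fαδ : ℝ → X)
    (hfαδ : ∀ δ : ℝ, 0 < δ →
      fαδ δ = S_inv δ ((ContinuousLinearMap.adjoint (Tδ δ)) (ρδ δ))) :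
    (∀ δ : ℝ, 0 < δ →
      ‖fαδ δ - fdag‖ ≤ (α δ) ^ (-(1:ℝ)/2) * (δ + C * δ) + ‖α δ • (S_inv δ fdag)‖) ∧
    (Tendsto (fun δ : ℝ => ‖Tδ δ - T‖) (nhdsWithin 0 (Set.Ioi 0)) (nhds 0) →
      Tendsto fαδ (nhdsWithin 0 (Set.Ioi 0)) (nhds fdag)) := by
  have hδpos : ∀ᶠ δ in 𝓝[>] (0 : ℝ), 0 < δ := self_mem_nhdsWithin
  have hinv (δ : ℝ) (hδ : 0 < δ) : (Tδ δ).IsTikhonovInverse (α δ) (S_inv δ) := (hS δ hδ).1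
  have hnoise (δ : ℝ) (hδ : 0 < δ) : ‖ρδ δ - Tδ δ fdag‖ ≤ δ + C * δ :=
    calc ‖ρδ δ - Tδ δ fdag‖ = ‖(T fdag - Tδ δ fdag) - (ρ - ρδ δ)‖ := by
          rw [hρ]; congr 1; abel
      _ ≤ ‖T fdag - Tδ δ fdag‖ + ‖ρ - ρδ δ‖ := norm_sub_le _ _
      _ ≤ δ + C * δ := by linarith [hdata δ hδ, hop δ hδ]
  have hbound (δ : ℝ) (hδ : 0 < δ) :
      ‖fαδ δ - fdag‖ ≤ α δ ^ (-(1 : ℝ) / 2) * (δ + C * δ) + ‖α δ • S_inv δ fdag‖ := by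
    rw [hfαδ δ hδ]
    refine ((hinv δ hδ).norm_apply_adjoint_sub_le (hαpos δ hδ) _ _).trans ?_
    have := Real.rpow_nonneg (hαpos δ hδ).le (-(1 : ℝ) / 2)
    gcongr
    exact hnoise δ hδ
  refine ⟨hbound, fun hT => ?_⟩
  have hnoise_lim : Tendsto (fun δ => α δ ^ (-(1 : ℝ) / 2) * (δ + C * δ)) (𝓝[>] 0) (𝓝 0) := by
    have := (tendsto_rpow_neg_half_mul_of_tendsto_sq_div
      (hδpos.mono fun δ hδ => ⟨hδ.le, hαpos δ hδ⟩) hδ2α).const_mul (1 + C)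
    simpa only [mul_zero, mul_add, add_mul, one_mul, mul_left_comm] using this
  have hreg_lim : Tendsto (fun δ => α δ • S_inv δ fdag) (𝓝[>] 0) (𝓝 0) :=
    ContinuousLinearMap.tendsto_smul_apply_of_isTikhonovInverse hT hα0
      (hδpos.mono fun δ hδ => ⟨(hαpos δ hδ).le, hinv δ hδ⟩) hfdag
  rw [tendsto_iff_norm_sub_tendsto_zero]
  refine squeeze_zero' (.of_forall fun _ => norm_nonneg _) (hδpos.mono hbound) ?_
  simpa using hnoise_lim.add hreg_lim.norm

theorem tikhonov_convergence_perturbed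
    {X Y : Type*} [NormedAddCommGroup X] [InnerProductSpace ℝ X] [CompleteSpace X]
    [NormedAddCommGroup Y] [InnerProductSpace ℝ Y] [CompleteSpace Y]
    (T : X →L[ℝ] Y) (fdag : X) (ρ : Y) (hρ : ρ = T fdag)
    (hfdag : fdag ∈ (LinearMap.ker (T : X →ₗ[ℝ] Y))ᗮ)
    (ρδ : ℝ → Y) (Tδ : ℝ → X →L[ℝ] Y) (C : ℝ) (hC : 0 ≤ C)
    (hdata : ∀ δ : ℝ, 0 < δ → ‖ρ - ρδ δ‖ ≤ δ)
    (hop : ∀ δ : ℝ, 0 < δ → ‖T fdag - (Tδ δ) fdag‖ ≤ C * δ)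
    (α : ℝ → ℝ) (hαpos : ∀ δ : ℝ, 0 < δ → 0 < α δ)
    (hα0 : Tendsto α (nhdsWithin 0 (Set.Ioi 0)) (nhds 0))
    (hδ2α : Tendsto (fun δ : ℝ => δ ^ 2 / α δ) (nhdsWithin 0 (Set.Ioi 0)) (nhds 0))
    (S_inv : ℝ → X →L[ℝ] X)
    (hS : ∀ δ : ℝ, 0 < δ →
      ((ContinuousLinearMap.adjoint (Tδ δ)).comp (Tδ δ)
          + α δ • ContinuousLinearMap.id ℝ X).comp (S_inv δ)
        = ContinuousLinearMap.id ℝ X ∧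
      (S_inv δ).comp ((ContinuousLinearMap.adjoint (Tδ δ)).comp (Tδ δ)
          + α δ • ContinuousLinearMap.id ℝ X)
        = ContinuousLinearMap.id ℝ X)
    (fαδ : ℝ → X)
    (hfαδ : ∀ δ : ℝ, 0 < δ →
      fαδ δ = S_inv δ ((ContinuousLinearMap.adjoint (Tδ δ)) (ρδ δ))) :
    (∀ δ : ℝ, 0 < δ →
      ‖fαδ δ - fdag‖ ≤ (α δ) ^ (-(1:ℝ)/2) * (δ + C * δ) + ‖α δ • (S_inv δ fdag)‖) ∧
    (Tendsto (fun δ : ℝ => ‖Tδ δ - T‖) (nhdsWithin 0 (Set.Ioi 0)) (nhds 0) →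
      Tendsto fαδ (nhdsWithin 0 (Set.Ioi 0)) (nhds fdag)) :=
  tikhonov_convergence_perturbed_general T fdag ρ hρ hfdag ρδ Tδ C hdata hop α hαpos hα0 hδ2α S_inv
    hS fαδ hfαδ
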